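/- Let D be a real symmetric bilinear form on a real vector space of symmetric 4×4 tensors, defined by D(h,k) := -(1/2)·(Σ_{μρ,νσ} η_{μρ}η_{νσ} h^{μν}k^{ρσ} + η_{νρ}η_{μσ} h^{μν}k^{ρσ} - η_{μν}η_{ρσ} h^{μν}k^{ρσ}) where η = diag(1,-1,-1,-1). Then D is non-degenerate on the 10-dimensional space of symmetric tensors. -/

import Mathlib

/-!
Writing `D(h, k) = -½ ⟨P h, k⟩` with the Frobenius pairing and `P h = 2 η h η - tr(η h) η`
(`h`, `η` symmetric), the choice `k = P h` gives `⟨P h, P h⟩ = 0`, so `P h = 0`.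
Then `h = (t/2) η⁻¹` with `t = tr(η h)`, and taking `tr(η ·)` gives `t = (n/2) t`,
so `t = 0` and `h = 0` unless `n = 2`.
-/

open Matrix Finset

section

variable {ι : Type*} [Fintype ι]

def gravitonPairing (η h k : Matrix ι ι ℝ) : ℝ :=
  ∑ μ, ∑ ν, ∑ ρ, ∑ σ, (η μ ρ * η ν σ + η ν ρ * η μ σ - η μ ν * η ρ σ) * h μ ν * k ρ σ

/-- For symmetric `h` and `η` this is twice the trace-reversed tensor `h - ½ tr(η h) η⁻¹` with
both indices lowered by `η`. -/
def traceReverse (η h : Matrix ι ι ℝ) : Matrix ι ι ℝ :=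
  ηᵀ * (h + hᵀ) * η - (ηᵀ * h).trace • η

theorem traceReverse_apply (η h : Matrix ι ι ℝ) (ρ σ : ι) :
    traceReverse η h ρ σ =
      ∑ μ, ∑ ν, (η μ ρ * η ν σ + η ν ρ * η μ σ - η μ ν * η ρ σ) * h μ ν := by
  simp only [traceReverse, Matrix.sub_apply, Matrix.smul_apply, mul_apply, Matrix.add_apply,
    transpose_apply, trace, diag_apply, smul_eq_mul, sum_mul, add_mul, mul_add,
    sum_add_distrib, sub_mul, sum_sub_distrib]
  congr 1
  · congr 1
    · rw [sum_comm]; simp only [mul_right_comm]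
    · simp only [mul_right_comm]
  · rw [sum_comm]; simp only [mul_right_comm]

theorem gravitonPairing_eq_trace (η h k : Matrix ι ι ℝ) :
    gravitonPairing η h k = (traceReverse η h * kᵀ).trace := by
  simp only [gravitonPairing, trace, diag_apply, mul_apply, transpose_apply, traceReverse_apply,
    sum_mul]
  exact (sum_congr rfl fun _ _ => sum_comm.trans (sum_congr rfl fun _ _ => sum_comm)).trans
    (sum_comm.trans (sum_congr rfl fun _ _ => sum_comm))

theorem traceReverse_isSymm {η : Matrix ι ι ℝ} (hη : η.IsSymm) (h : Matrix ι ι ℝ) :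
    (traceReverse η h).IsSymm := by
  simp only [IsSymm, traceReverse, transpose_sub, transpose_smul, transpose_mul, transpose_add,
    transpose_transpose, hη.eq, add_comm hᵀ, Matrix.mul_assoc]

variable [DecidableEq ι] {η h : Matrix ι ι ℝ}

theorem eq_smul_inv_of_traceReverse_eq_zero (hη : η.IsSymm) (hdet : IsUnit η.det)
    (hh : h.IsSymm) (h0 : traceReverse η h = 0) : h = ((ηᵀ * h).trace / 2) • η⁻¹ := by
  rw [traceReverse, sub_eq_zero, hη.eq, hh.eq, ← two_smul ℝ h] at h0
  rw [hη.eq]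
  set t := (η * h).trace
  have hlower : η * h * η = (t / 2) • η := by
    rw [div_eq_inv_mul, mul_smul, ← h0, Matrix.mul_smul, Matrix.smul_mul, smul_smul]
    norm_num
  calc h = η⁻¹ * (η * h * η) * η⁻¹ := by
        rw [Matrix.mul_assoc, Matrix.mul_assoc, mul_nonsing_inv _ hdet, Matrix.mul_one,
          nonsing_inv_mul_cancel_left _ _ hdet]
    _ = (t / 2) • η⁻¹ := by
        rw [hlower, Matrix.mul_smul, Matrix.smul_mul, nonsing_inv_mul _ hdet, Matrix.one_mul]

theorem eq_zero_of_traceReverse_eq_zero (hη : η.IsSymm) (hdet : IsUnit η.det)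
    (hcard : Fintype.card ι ≠ 2) (hh : h.IsSymm) (h0 : traceReverse η h = 0) : h = 0 := by
  have hh' := eq_smul_inv_of_traceReverse_eq_zero hη hdet hh h0
  have ht : (ηᵀ * h).trace = (ηᵀ * h).trace / 2 * Fintype.card ι := by
    conv_lhs => rw [hh']
    rw [Matrix.mul_smul, trace_smul, hη.eq, mul_nonsing_inv _ hdet, trace_one, smul_eq_mul]
  have ht0 : (ηᵀ * h).trace = 0 := by
    have hn : (Fintype.card ι : ℝ) - 2 ≠ 0 := sub_ne_zero.mpr (mod_cast hcard)
    have : (ηᵀ * h).trace * ((Fintype.card ι : ℝ) - 2) = 0 := by linarith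
    exact (mul_eq_zero.mp this).resolve_right hn
  rw [hh', ht0, zero_div, zero_smul]

theorem eq_zero_of_forall_gravitonPairing_eq_zero (hη : η.IsSymm) (hdet : IsUnit η.det)
    (hcard : Fintype.card ι ≠ 2) (hh : h.IsSymm)
    (H : ∀ k : Matrix ι ι ℝ, k.IsSymm → gravitonPairing η h k = 0) : h = 0 := by
  have hk := H _ (traceReverse_isSymm hη h)
  rw [gravitonPairing_eq_trace, ← conjTranspose_eq_transpose_of_trivial,
    trace_mul_conjTranspose_self_eq_zero_iff] at hk
  exact eq_zero_of_traceReverse_eq_zero hη hdet hcard hh hk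

end

theorem stmt_16
    (η : Fin 4 → Fin 4 → ℝ)
    (hη : η = fun μ ν => if μ = ν then (if μ = 0 then 1 else -1) else 0)
    (D : Matrix (Fin 4) (Fin 4) ℝ → Matrix (Fin 4) (Fin 4) ℝ → ℝ)
    (hD : ∀ h k, D h k = -(1 / 2) *
      ∑ μ, ∑ ν, ∑ ρ, ∑ σ,
        (η μ ρ * η ν σ + η ν ρ * η μ σ - η μ ν * η ρ σ) * h μ ν * k ρ σ) :
    ∀ h : Matrix (Fin 4) (Fin 4) ℝ, h.IsSymm →
      (∀ k : Matrix (Fin 4) (Fin 4) ℝ, k.IsSymm → D h k = 0) → h = 0 := by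
  intro h hh H
  have hdiag : η = diagonal fun μ => if μ = 0 then 1 else -1 := by
    rw [hη]; rfl
  refine eq_zero_of_forall_gravitonPairing_eq_zero (η := η) ?_ ?_ (by simp) hh fun k hk => ?_
  · rw [hdiag]; exact isSymm_diagonal _
  · simp [hdiag, Fin.prod_univ_four]
  · simpa [gravitonPairing, hD] using H k hk
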